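/- arXiv:0901.1247 — 4 statements merged into one kernel-verified Lean document; each statement's English description precedes it below -/
import Mathlib

section
/- Let S be a homeomorphism of a compact metric space M and A ⊂ M a closed subset which is a quasi-attractor: there exists a sequence (n_i) of natural numbers of (upper) density one such that for every x ∈ M, every limit point of the sequence (S^{n_i}x) lies in A. Then every S-invariant Borel probability measure is concentrated on A, i.e., μ(A) = 1 for all μ ∈ M_S(M). -/
open MeasureTheory Filter
open scoped Classical

/-- A strictly increasing sequence of natural numbers has density one if
`|{k ≤ N : k ∈ range n}| / (N+1) → 1`. -/
def HasDensityOne (n : ℕ → ℕ) : Prop :=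
  Tendsto (fun N : ℕ =>
      (((Finset.range (N + 1)).filter (fun k => k ∈ Set.range n)).card : ℝ) / (N + 1))
    atTop (nhds 1)

/-!
Let `F` be closed and disjoint from `A`, and let `f : M → [0, 1]` be a Urysohn function with
`f = 0` on `A` and `f = 1` on `F`. By compactness, `f (S^[n i] x) → 0` for every `x`; since the
times outside `(n i)` have density zero and `f ≤ 1`, the Birkhoff averages of `f` tend to `0`
everywhere. Invariance of `μ` makes every Birkhoff average have integral `∫ f dμ`, so dominated
convergence gives `∫ f dμ = 0`, hence `μ F = 0`. Inner regularity by closed sets then gives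
`μ Aᶜ = 0`.
-/

open Finset Set Topology

theorem sum_range_le_sum_comp_add_card_filter_not_mem_range {u : ℕ → ℝ} (hu0 : ∀ k, 0 ≤ u k)
    (hu1 : ∀ k, u k ≤ 1) {n : ℕ → ℕ} (hn : StrictMono n) (N : ℕ) :
    ∑ k ∈ range N, u k ≤
      ∑ i ∈ range N, u (n i) + #{k ∈ range N | k ∉ Set.range n} := by
  rw [← sum_filter_add_sum_filter_not (range N) (· ∈ Set.range n)]
  gcongr ?_ + ?_
  · have hsub : {k ∈ range N | k ∈ Set.range n} ⊆ (range N).image n := by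
      intro k hk
      obtain ⟨hkN, i, rfl⟩ := mem_filter.1 hk
      exact mem_image_of_mem n (mem_range.2 ((hn.id_le i).trans_lt (mem_range.1 hkN)))
    calc ∑ k ∈ range N with k ∈ Set.range n, u k ≤ ∑ k ∈ (range N).image n, u k :=
          sum_le_sum_of_subset_of_nonneg hsub fun k _ _ => hu0 k
      _ = ∑ i ∈ range N, u (n i) := sum_image fun _ _ _ _ h => hn.injective h
  · simpa using sum_le_sum fun k (_ : k ∈ {k ∈ range N | k ∉ Set.range n}) => hu1 k

theorem tendsto_cesaro_zero_of_tendsto_comp_of_hasDensityOne {u : ℕ → ℝ} (hu0 : ∀ k, 0 ≤ u k)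
    (hu1 : ∀ k, u k ≤ 1) {n : ℕ → ℕ} (hn : StrictMono n) (hdens : HasDensityOne n)
    (hlim : Tendsto (u ∘ n) atTop (𝓝 0)) :
    Tendsto (fun N : ℕ => (N⁻¹ : ℝ) * ∑ k ∈ range N, u k) atTop (𝓝 0) := by
  rw [← tendsto_add_atTop_iff_nat 1]
  have hbound : ∀ N : ℕ, ((N + 1 : ℕ)⁻¹ : ℝ) * ∑ k ∈ range (N + 1), u k ≤
      ((N + 1 : ℕ)⁻¹ : ℝ) * ∑ i ∈ range (N + 1), u (n i) +
        (1 - (#{k ∈ range (N + 1) | k ∈ Set.range n} : ℝ) / (N + 1)) := by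
    intro N
    have hcard := card_filter_add_card_filter_not (s := range (N + 1)) (· ∈ Set.range n)
    rw [card_range] at hcard
    calc ((N + 1 : ℕ)⁻¹ : ℝ) * ∑ k ∈ range (N + 1), u k
        ≤ ((N + 1 : ℕ)⁻¹ : ℝ) * (∑ i ∈ range (N + 1), u (n i) +
            #{k ∈ range (N + 1) | k ∉ Set.range n}) := by
          gcongr
          exact sum_range_le_sum_comp_add_card_filter_not_mem_range hu0 hu1 hn _
      _ = _ := by
          rw [← Nat.cast_inj (R := ℝ)] at hcard
          push_cast at hcard ⊢
          field_simp
          linarith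
  have hupper : Tendsto (fun N : ℕ => ((N + 1 : ℕ)⁻¹ : ℝ) * ∑ i ∈ range (N + 1), u (n i) +
      (1 - (#{k ∈ range (N + 1) | k ∈ Set.range n} : ℝ) / (N + 1))) atTop (𝓝 0) := by
    simpa using (hlim.cesaro.comp (tendsto_add_atTop_nat 1)).add
      ((tendsto_const_nhds (x := (1 : ℝ))).sub hdens)
  refine tendsto_of_tendsto_of_tendsto_of_le_of_le tendsto_const_nhds hupper (fun N => ?_) hbound
  exact mul_nonneg (by positivity) (sum_nonneg fun k _ => hu0 k)

theorem norm_birkhoffAverage_le {X E : Type*} [NormedAddCommGroup E] [NormedSpace ℝ E]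
    {T : X → X} {g : X → E} {C : ℝ} (hC : ∀ x, ‖g x‖ ≤ C) (N : ℕ) (x : X) :
    ‖birkhoffAverage ℝ T g N x‖ ≤ C := by
  rcases Nat.eq_zero_or_pos N with rfl | hN
  · simpa using (norm_nonneg _).trans (hC x)
  have hsum : ‖birkhoffSum T g N x‖ ≤ N * C := by
    simpa [birkhoffSum] using norm_sum_le_of_le (range N) fun k _ => hC (T^[k] x)
  rw [birkhoffAverage, norm_smul, norm_inv, Real.norm_natCast]
  calc (N : ℝ)⁻¹ * ‖birkhoffSum T g N x‖ ≤ (N : ℝ)⁻¹ * (N * C) := by gcongr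
    _ = C := by field_simp

section Birkhoff

variable {X : Type*} [MeasurableSpace X] {μ : Measure X} {T : X → X} {g : X → ℝ}

theorem MeasureTheory.MeasurePreserving.integrable_comp_iterate (hT : MeasurePreserving T μ μ)
    (hg : Integrable g μ) (k : ℕ) : Integrable (fun x => g (T^[k] x)) μ :=
  (hT.iterate k).integrable_comp_of_integrable hg

theorem MeasureTheory.MeasurePreserving.integrable_birkhoffAverage
    (hT : MeasurePreserving T μ μ) (hg : Integrable g μ) (N : ℕ) :
    Integrable (birkhoffAverage ℝ T g N) μ := by
  unfold birkhoffAverage birkhoffSum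
  exact (integrable_finsetSum _ fun k _ => hT.integrable_comp_iterate hg k).smul (N : ℝ)⁻¹

theorem MeasureTheory.MeasurePreserving.integral_birkhoffAverage
    (hT : MeasurePreserving T μ μ) (hg : Integrable g μ) {N : ℕ} (hN : N ≠ 0) :
    ∫ x, birkhoffAverage ℝ T g N x ∂μ = ∫ x, g x ∂μ := by
  have hiter (k : ℕ) : ∫ x, g (T^[k] x) ∂μ = ∫ x, g x ∂μ := by
    have h := hT.iterate k
    rw [← integral_map h.measurable.aemeasurable (h.map_eq.symm ▸ hg.aestronglyMeasurable),
      h.map_eq]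
  unfold birkhoffAverage birkhoffSum
  rw [integral_smul, integral_finsetSum _ fun k _ => hT.integrable_comp_iterate hg k]
  simp only [hiter, sum_const, card_range, nsmul_eq_mul, smul_eq_mul]
  field_simp

theorem MeasureTheory.MeasurePreserving.integral_eq_of_tendsto_birkhoffAverage
    [IsFiniteMeasure μ] (hT : MeasurePreserving T μ μ) (hg : Integrable g μ) {C : ℝ}
    (hC : ∀ x, ‖g x‖ ≤ C) {φ : X → ℝ}
    (hlim : ∀ᵐ x ∂μ, Tendsto (fun N => birkhoffAverage ℝ T g N x) atTop (𝓝 (φ x))) :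
    ∫ x, φ x ∂μ = ∫ x, g x ∂μ := by
  have hdom : Tendsto (fun N => ∫ x, birkhoffAverage ℝ T g N x ∂μ) atTop (𝓝 (∫ x, φ x ∂μ)) :=
    tendsto_integral_of_dominated_convergence (fun _ => C)
      (fun N => (hT.integrable_birkhoffAverage hg N).aestronglyMeasurable) (integrable_const C)
      (fun N => ae_of_all _ (norm_birkhoffAverage_le hC N)) hlim
  refine tendsto_nhds_unique hdom (tendsto_const_nhds.congr' ?_)
  filter_upwards [eventually_ne_atTop 0] with N hN
  exact (hT.integral_birkhoffAverage hg hN).symm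

end Birkhoff

theorem tendsto_comp_of_forall_mapClusterPt_mem {X Y ι : Type*} [TopologicalSpace X]
    [CompactSpace X] [TopologicalSpace Y] {l : Filter ι} {u : ι → X} {A : Set X}
    (hA : ∀ y, MapClusterPt y l u → y ∈ A) {f : X → Y} (hf : Continuous f) {b : Y}
    (hfA : EqOn f (fun _ => b) A) : Tendsto (f ∘ u) l (𝓝 b) :=
  (hf.tendsto_nhdsSet_nhds hfA).comp <|
    isCompact_univ.tendsto_nhdsSet_of_mapClusterPt (.of_forall fun _ => trivial) fun y _ => hA y

theorem ae_eq_zero_of_forall_mapClusterPt_mem {X : Type*} [TopologicalSpace X]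
    [CompactSpace X] [MeasurableSpace X] [OpensMeasurableSpace X] {μ : Measure X}
    [IsFiniteMeasure μ] {T : X → X} (hT : MeasurePreserving T μ μ)
    {A : Set X} {n : ℕ → ℕ} (hn : StrictMono n) (hdens : HasDensityOne n)
    (hA : ∀ x y, MapClusterPt y atTop (fun i => T^[n i] x) → y ∈ A)
    {f : X → ℝ} (hf : Continuous f) (hf0 : ∀ x, 0 ≤ f x) (hf1 : ∀ x, f x ≤ 1)
    (hfA : EqOn f 0 A) : f =ᵐ[μ] 0 := by
  have hlim (x : X) : Tendsto (fun N => birkhoffAverage ℝ T f N x) atTop (𝓝 0) :=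
    tendsto_cesaro_zero_of_tendsto_comp_of_hasDensityOne (fun _ => hf0 _) (fun _ => hf1 _) hn
      hdens (tendsto_comp_of_forall_mapClusterPt_mem (hA x) hf hfA)
  have hint : Integrable f μ := hf.integrable_of_hasCompactSupport (.of_compactSpace f)
  have hbound (x : X) : ‖f x‖ ≤ 1 := by rw [Real.norm_of_nonneg (hf0 x)]; exact hf1 x
  refine (integral_eq_zero_iff_of_nonneg hf0 hint).1 ?_
  simpa using (hT.integral_eq_of_tendsto_birkhoffAverage hint hbound (ae_of_all _ hlim)).symm

/-- Let `S` be a homeomorphism of a compact metric space `M` and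
`A ⊆ M` a closed quasi-attractor: there is a density-one sequence `(n i)` such that for
every `x ∈ M` every limit point of `(S^[n i] x)` lies in `A`.  Then every `S`-invariant
Borel probability measure is concentrated on `A`: `μ(A) = 1`. -/
theorem lens_stmt8 {M : Type*} [MetricSpace M] [CompactSpace M]
    [MeasurableSpace M] [BorelSpace M]
    (S : M ≃ₜ M) (A : Set M) (hA : IsClosed A)
    (n : ℕ → ℕ) (hmono : StrictMono n) (hdens : HasDensityOne n)
    (hqa : ∀ x y : M, MapClusterPt y atTop (fun i => (⇑S)^[n i] x) → y ∈ A)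
    (μ : Measure M) [IsProbabilityMeasure μ] (hμ : MeasurePreserving S μ μ) :
    μ A = 1 := by
  have hclosed_null (F : Set M) (hFA : F ⊆ Aᶜ) (hF : IsClosed F) : μ F = 0 := by
    obtain ⟨f, hfA, hfF, hf01⟩ := exists_continuous_zero_one_of_isClosed hA hF
      (disjoint_compl_right.mono_right hFA)
    have hf : ⇑f =ᵐ[μ] 0 := ae_eq_zero_of_forall_mapClusterPt_mem hμ hmono hdens hqa
      f.continuous (fun x => (hf01 x).1) (fun x => (hf01 x).2) hfA
    exact measure_mono_null (fun x hx => by simp [hfF hx]) (ae_iff.1 hf)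
  have hcompl : μ Aᶜ = 0 := by
    rw [hA.isOpen_compl.measure_eq_iSup_isClosed]
    simpa only [ENNReal.iSup_eq_zero] using hclosed_null
  exact (prob_compl_eq_zero_iff hA.measurableSet).1 hcompl
end

section
/- Let S be a homeomorphism of a compact metric space M and A ⊂ M a closed quasi-attractor (there is a density-one sequence (n_i) such that for every x ∈ M all limit points of (S^{n_i}x) lie in A). Then every minimal subset of (M,S) is contained in A. -/
/-!
Let `y` be a point of a minimal set `K` and `U` an open neighbourhood of `y`. By minimality the
sets `S⁻ᵐ U`, `m ∈ ℤ`, cover `K`, so by compactness finitely many do; hence the return times of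
`y` to `U` form a syndetic set, meeting every interval of some fixed length `g`. A density-one set
contains intervals of every length arbitrarily far out, so it meets the return times infinitely
often. Thus `y` is a limit point of `(S^{n_i} y)`, and `y ∈ A`.
-/

open MeasureTheory Filter
open scoped Classical

def IsThickSet (s : Set ℕ) : Prop :=
  ∀ g a₀ : ℕ, ∃ a ≥ a₀, Set.Ico a (a + g) ⊆ s

def IsSyndeticSet (s : Set ℕ) : Prop :=
  ∃ g : ℕ, ∀ a : ℕ, (s ∩ Set.Ico a (a + g)).Nonempty

theorem IsSyndeticSet.infinite_inter {s t : Set ℕ} (hs : IsSyndeticSet s) (ht : IsThickSet t) :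
    (s ∩ t).Infinite := by
  obtain ⟨g, hg⟩ := hs
  refine Set.infinite_of_forall_exists_gt fun a₀ => ?_
  obtain ⟨a, ha₀, hat⟩ := ht g (a₀ + 1)
  obtain ⟨k, hks, hka⟩ := hg a
  exact ⟨k, ⟨hks, hat hka⟩, by linarith [hka.1]⟩

theorem isThickSet_of_tendsto_density {s : Set ℕ}
    (hs : Tendsto (fun N : ℕ => (((Finset.range (N + 1)).filter (· ∈ s)).card : ℝ) / (N + 1))
      atTop (nhds 1)) :
    IsThickSet s := by
  intro g a₀
  rcases Nat.eq_zero_or_pos g with rfl | hg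
  · exact ⟨a₀, le_rfl, by simp⟩
  by_contra! hgap
  -- Each block `[a₀ + g k, a₀ + g (k + 1))` has a point outside `s`; the first `m` of them keep
  -- the density at `a₀ + g m` below `g / (g + 1)` as soon as `m > a₀`.
  choose t ht hts using fun k : ℕ => Set.not_subset.1 (hgap (a₀ + g * k) (by omega))
  have ht_mono : StrictMono t := strictMono_nat_of_lt_succ fun k => by
    have := (ht k).2; have := (ht (k + 1)).1; rw [mul_add_one] at *; omega
  have hcount : ∀ m, ((Finset.range (a₀ + g * m + 1)).filter (· ∈ s)).card + m ≤
      a₀ + g * m + 1 := fun m => by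
    have hm : m ≤ ((Finset.range (a₀ + g * m + 1)).filter (· ∉ s)).card := by
      calc m = ((Finset.range m).image t).card := by
            rw [Finset.card_image_of_injective _ ht_mono.injective, Finset.card_range]
        _ ≤ _ := Finset.card_le_card fun _ hx => by
            obtain ⟨k, hkm, rfl⟩ := Finset.mem_image.1 hx
            have := (ht k).2
            have : g * (k + 1) ≤ g * m := Nat.mul_le_mul_left g (Finset.mem_range.1 hkm)
            simp only [Finset.mem_filter, Finset.mem_range]
            exact ⟨by rw [mul_add_one] at this; omega, hts k⟩
    have := Finset.card_filter_add_card_filter_not (s := Finset.range (a₀ + g * m + 1)) (· ∈ s)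
    rw [Finset.card_range] at this
    omega
  obtain ⟨N₀, hN₀⟩ := eventually_atTop.1 <|
    hs.eventually (eventually_gt_nhds (show (g : ℝ) / (g + 1) < 1 by
      rw [div_lt_one (by positivity)]; linarith))
  obtain ⟨m, hm⟩ : ∃ m, m = a₀ + 1 + N₀ := ⟨_, rfl⟩
  have hlt := hN₀ (a₀ + g * m) (by nlinarith)
  rw [div_lt_div_iff₀ (by positivity) (by positivity)] at hlt
  have hlt' : g * (a₀ + g * m + 1) <
      ((Finset.range (a₀ + g * m + 1)).filter (· ∈ s)).card * (g + 1) := by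
    exact_mod_cast hlt
  nlinarith [Nat.mul_le_mul_right (g + 1) (hcount m)]

namespace Homeomorph

variable {X : Type*} [TopologicalSpace X]

theorem coe_pow (S : X ≃ₜ X) (k : ℕ) : ⇑(S ^ k) = S^[k] := by
  induction k with
  | zero => rfl
  | succ k ih => funext x; rw [pow_succ, mul_apply, ih, Function.iterate_succ_apply]

theorem iterate_eq_zpow_apply (S : X ≃ₜ X) (k : ℕ) (x : X) : S^[k] x = (S ^ (k : ℤ)) x := by
  rw [zpow_natCast, coe_pow]

theorem preimage_iUnion_zpow_preimage (S : X ≃ₜ X) (U : Set X) :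
    S ⁻¹' ⋃ m : ℤ, ⇑(S ^ m) ⁻¹' U = ⋃ m : ℤ, ⇑(S ^ m) ⁻¹' U := by
  have hshift (m : ℤ) : S ⁻¹' (⇑(S ^ m) ⁻¹' U) = ⇑(S ^ (m + 1)) ⁻¹' U := by
    rw [zpow_add_one]; rfl
  simp only [Set.preimage_iUnion, hshift]
  exact (add_right_surjective (1 : ℤ)).iUnion_comp fun m => ⇑(S ^ m) ⁻¹' U

variable {S : X ≃ₜ X} {K : Set X}

theorem subset_iUnion_zpow_preimage_of_minimal (hKc : IsClosed K) (hKinv : S '' K = K)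
    (hmin : ∀ K' ⊆ K, K'.Nonempty → IsClosed K' → S '' K' = K' → K' = K)
    {U : Set X} (hU : IsOpen U) {y : X} (hyK : y ∈ K) (hyU : y ∈ U) :
    K ⊆ ⋃ m : ℤ, ⇑(S ^ m) ⁻¹' U := by
  set V := ⋃ m : ℤ, ⇑(S ^ m) ⁻¹' U
  by_contra hKV
  have hV : S ⁻¹' V = V := S.preimage_iUnion_zpow_preimage U
  have hmin' := hmin (K \ V) Set.sdiff_subset (Set.sdiff_nonempty.2 hKV)
    (hKc.sdiff (isOpen_iUnion fun m => hU.preimage (S ^ m).continuous))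
    (by rw [Set.image_sdiff S.injective, hKinv, ← hV, S.image_preimage, hV])
  exact (hmin' ▸ hyK).2 (Set.mem_iUnion.2 ⟨0, hyU⟩)

theorem isSyndeticSet_returns_of_minimal [CompactSpace X] (hKc : IsClosed K)
    (hKinv : S '' K = K)
    (hmin : ∀ K' ⊆ K, K'.Nonempty → IsClosed K' → S '' K' = K' → K' = K)
    {U : Set X} (hU : IsOpen U) {y : X} (hyK : y ∈ K) (hyU : y ∈ U) :
    IsSyndeticSet {t | S^[t] y ∈ U} := by
  obtain ⟨F, hF⟩ := hKc.isCompact.elim_finite_subcover _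
    (fun m => hU.preimage (S ^ m).continuous)
    (subset_iUnion_zpow_preimage_of_minimal hKc hKinv hmin hU hyK hyU)
  set L := F.sup Int.natAbs
  refine ⟨2 * L + 1, fun a => ?_⟩
  have hz : S^[a + L] y ∈ K := (Set.mapsTo_iff_image_subset.2 hKinv.subset).iterate _ hyK
  obtain ⟨m, hmF, hmU⟩ := Set.mem_iUnion₂.1 (hF hz)
  have hmL : m.natAbs ≤ L := Finset.le_sup hmF
  refine ⟨(m + (a + L : ℕ)).toNat, ?_, by simp only [Set.mem_Ico]; omega⟩
  rw [Set.mem_ofPred_eq, iterate_eq_zpow_apply, Int.toNat_of_nonneg (by omega), zpow_add,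
    mul_apply, ← iterate_eq_zpow_apply]
  exact hmU

end Homeomorph

theorem lens_stmt9_general {M : Type*} [MetricSpace M] [CompactSpace M]
    (S : M ≃ₜ M) (A : Set M)
    (n : ℕ → ℕ) (hdens : HasDensityOne n)
    (hqa : ∀ x y : M, MapClusterPt y atTop (fun i => (⇑S)^[n i] x) → y ∈ A)
    (K : Set M) (hKc : IsClosed K) (hKinv : ⇑S '' K = K)
    (hmin : ∀ K' ⊆ K, K'.Nonempty → IsClosed K' → ⇑S '' K' = K' → K' = K) :
    K ⊆ A := by
  intro y hyK
  refine hqa y y (mapClusterPt_iff_frequently.2 fun s hs => ?_)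
  obtain ⟨U, hUs, hU, hyU⟩ := mem_nhds_iff.1 hs
  have hreturns := S.isSyndeticSet_returns_of_minimal hKc hKinv hmin hU hyK hyU
  have hinf : (n ⁻¹' {t | S^[t] y ∈ U}).Infinite := by
    refine Set.Infinite.of_image n ?_
    rw [Set.image_preimage_eq_inter_range]
    exact hreturns.infinite_inter (isThickSet_of_tendsto_density hdens)
  exact (Nat.frequently_atTop_iff_infinite.2 hinf).mono fun _ hi => hUs hi

/-- Let `S` be a homeomorphism of a compact metric space `M` and
`A ⊆ M` a closed quasi-attractor (there is a density-one sequence `(n i)` such that for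
every `x` all limit points of `(S^[n i] x)` lie in `A`).  Then every minimal subset of
`(M, S)` is contained in `A`. -/
theorem lens_stmt9 {M : Type*} [MetricSpace M] [CompactSpace M]
    (S : M ≃ₜ M) (A : Set M) (hA : IsClosed A)
    (n : ℕ → ℕ) (hmono : StrictMono n) (hdens : HasDensityOne n)
    (hqa : ∀ x y : M, MapClusterPt y atTop (fun i => (⇑S)^[n i] x) → y ∈ A)
    (K : Set M) (hKne : K.Nonempty) (hKc : IsClosed K) (hKinv : ⇑S '' K = K)
    (hmin : ∀ K' ⊆ K, K'.Nonempty → IsClosed K' → ⇑S '' K' = K' → K' = K) :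
    K ⊆ A :=
  lens_stmt9_general S A n hdens hqa K hKc hKinv hmin
end

section
/- Let T be a measure-preserving automorphism of a standard probability space (X,B,μ) that is rigid: there is an increasing sequence (n_i) with U_T^{n_i} → Id strongly on L²(μ). Then the lens T̃ : C₂(μ) → C₂(μ), T̃(ξ) = (T×T)_*ξ, is uniformly rigid: T̃^{n_i} → Id uniformly on C₂(μ) (equivalently, in the metric induced by the weak operator topology on the corresponding Markov operators). -/
/-!
Strong convergence `U_T^{n i} → Id` applied to the functions `x ↦ dist x c` shows, by
compactness, that `T^{n i}` converges to the identity in measure. For a coupling `ξ` of `μ`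
with itself, the set where `T^{n i} × T^{n i}` moves a point by at least `δ` has `ξ`-measure at
most twice the `μ`-measure of the set where `T^{n i}` does, so the bound is uniform in `ξ`; and
a map moving all but `δ` of the mass by less than `δ` is `δ`-close to the identity in the
Lévy–Prokhorov distance.
-/

open MeasureTheory Filter Metric Set ENNReal Topology

section ConvergenceInMeasure

variable {α ι : Type*} [MeasurableSpace α] {μ : Measure α} {l : Filter ι}

theorem tendstoInMeasure_comp_of_tendsto_compMeasurePreserving {E : Type*}
    [NormedAddCommGroup E] {p : ℝ≥0∞} [Fact (1 ≤ p)] {S : ι → α → α}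
    (hS : ∀ i, MeasurePreserving (S i) μ μ)
    (hrig : ∀ f : Lp E p μ,
      Tendsto (fun i => ‖Lp.compMeasurePreserving (S i) (hS i) f - f‖) l (𝓝 0))
    {f : α → E} (hf : MemLp f p μ) :
    TendstoInMeasure μ (fun i => f ∘ S i) l f := by
  have hLp : Tendsto (fun i => Lp.compMeasurePreserving (S i) (hS i) (hf.toLp f)) l
      (𝓝 (hf.toLp f)) :=
    tendsto_iff_norm_sub_tendsto_zero.2 (hrig _)
  refine (tendstoInMeasure_of_tendsto_Lp hLp).congr (fun i => ?_) hf.coeFn_toLp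
  filter_upwards [Lp.coeFn_compMeasurePreserving (hf.toLp f) (hS i),
    (hS i).quasiMeasurePreserving.ae_eq_comp hf.coeFn_toLp] with x hx hx'
  rw [hx, hx']

/-- On a totally bounded space, convergence in measure can be tested on the distance functions
to single points, since finitely many of them control the distance up to a fixed error. -/
theorem tendstoInMeasure_of_forall_tendstoInMeasure_dist {X : Type*} [PseudoMetricSpace X]
    (hX : TotallyBounded (univ : Set X)) {f : ι → α → X} {g : α → X}
    (h : ∀ c, TendstoInMeasure μ (fun i x => dist (f i x) c) l (fun x => dist (g x) c)) :
    TendstoInMeasure μ f l g := by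
  rw [tendstoInMeasure_iff_dist]
  intro ε hε
  obtain ⟨t, ht, hcover⟩ := totallyBounded_iff.1 hX (ε / 4) (by positivity)
  have hbad : ∀ i, {x | ε ≤ dist (f i x) (g x)} ⊆
      ⋃ c ∈ ht.toFinset, {x | ε / 2 ≤ dist (dist (f i x) c) (dist (g x) c)} := by
    intro i x hx
    obtain ⟨c, hc, hxc⟩ := mem_iUnion₂.1 (hcover (mem_univ (g x)))
    refine mem_iUnion₂.2 ⟨c, ht.mem_toFinset.2 hc, ?_⟩
    have := dist_triangle_right (f i x) (g x) c
    rw [mem_ball] at hxc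
    show ε / 2 ≤ |dist (f i x) c - dist (g x) c|
    linarith [hx.out, le_abs_self (dist (f i x) c - dist (g x) c)]
  have hsum : Tendsto (fun i => ∑ c ∈ ht.toFinset,
      μ {x | ε / 2 ≤ dist (dist (f i x) c) (dist (g x) c)}) l (𝓝 0) := by
    simpa using tendsto_finsetSum ht.toFinset fun c _ =>
      tendstoInMeasure_iff_dist.1 (h c) (ε / 2) (by positivity)
  exact tendsto_of_tendsto_of_tendsto_of_le_of_le tendsto_const_nhds hsum (fun _ => bot_le)
    fun i => (measure_mono (hbad i)).trans (measure_biUnion_finset_le _ _)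

end ConvergenceInMeasure

theorem MeasureTheory.Measure.iterate_map {X : Type*} [MeasurableSpace X] {F : X → X}
    (hF : Measurable F) (k : ℕ) (ξ : Measure X) :
    (fun ρ : Measure X => ρ.map F)^[k] ξ = ξ.map F^[k] := by
  induction k with
  | zero => simp [Measure.map_id]
  | succ k ih =>
    rw [Function.iterate_succ_apply', ih, Measure.map_map hF (hF.iterate k),
      ← Function.iterate_succ' F k]

theorem measure_le_dist_prodMap_le_add {X Y : Type*} [PseudoMetricSpace X] [PseudoMetricSpace Y]
    [MeasurableSpace X] [MeasurableSpace Y] (ξ : Measure (X × Y)) (f : X → X) (g : Y → Y)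
    (ε : ℝ) :
    ξ {z | ε ≤ dist (Prod.map f g z) z} ≤
      ξ.map Prod.fst {x | ε ≤ dist (f x) x} + ξ.map Prod.snd {y | ε ≤ dist (g y) y} := by
  have hsplit : {z | ε ≤ dist (Prod.map f g z) z} =
      Prod.fst ⁻¹' {x | ε ≤ dist (f x) x} ∪ Prod.snd ⁻¹' {y | ε ≤ dist (g y) y} := by
    ext z
    simp [Prod.dist_eq]
  rw [hsplit]
  exact (measure_union_le _ _).trans <| add_le_add
    (Measure.le_map_apply measurable_fst.aemeasurable _)
    (Measure.le_map_apply measurable_snd.aemeasurable _)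

theorem levyProkhorovDist_map_le {Z : Type*} [PseudoMetricSpace Z] [MeasurableSpace Z]
    [OpensMeasurableSpace Z] (ξ : Measure Z) [IsProbabilityMeasure ξ] {S : Z → Z}
    (hS : Measurable S) {δ : ℝ} (hδ : 0 ≤ δ) (h : ξ {z | δ ≤ dist (S z) z} ≤ ENNReal.ofReal δ) :
    levyProkhorovDist (ξ.map S) ξ ≤ δ := by
  have := Measure.isProbabilityMeasure_map (μ := ξ) hS.aemeasurable
  refine levyProkhorovDist_le_of_forall_le _ _ hδ fun ε B hε hB => ?_
  have hsub : S ⁻¹' B ⊆ thickening ε B ∪ {z | δ ≤ dist (S z) z} := fun z hz => by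
    by_cases hz' : δ ≤ dist (S z) z
    · exact Or.inr hz'
    · exact Or.inl (mem_thickening_iff.2 ⟨S z, hz, by rw [dist_comm]; linarith⟩)
  rw [Measure.map_apply hS hB]
  calc ξ (S ⁻¹' B) ≤ ξ (thickening ε B) + ξ {z | δ ≤ dist (S z) z} :=
        (measure_mono hsub).trans (measure_union_le _ _)
    _ ≤ ξ (thickening ε B) + ENNReal.ofReal ε := by
        gcongr
        exact h.trans (ENNReal.ofReal_le_ofReal hε.le)

theorem levyProkhorovDist_map_prodMap_le {X : Type*} [PseudoMetricSpace X] [MeasurableSpace X]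
    [OpensMeasurableSpace X] [SecondCountableTopology X] (μ : Measure X)
    (ξ : Measure (X × X)) [IsProbabilityMeasure ξ] (hfst : ξ.map Prod.fst = μ)
    (hsnd : ξ.map Prod.snd = μ) {S : X → X} (hS : Measurable S) {δ : ℝ} (hδ : 0 ≤ δ)
    (h : 2 * μ {x | δ ≤ dist (S x) x} ≤ ENNReal.ofReal δ) :
    levyProkhorovDist (ξ.map (Prod.map S S)) ξ ≤ δ := by
  refine levyProkhorovDist_map_le ξ (hS.prodMap hS) hδ ?_
  calc ξ {z | δ ≤ dist (Prod.map S S z) z}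
      ≤ μ {x | δ ≤ dist (S x) x} + μ {x | δ ≤ dist (S x) x} := by
        simpa only [hfst, hsnd] using measure_le_dist_prodMap_le_add ξ S S δ
    _ ≤ ENNReal.ofReal δ := by rwa [← two_mul]

theorem lens_stmt10_general {X : Type*} [MetricSpace X] [CompactSpace X]
    [MeasurableSpace X] [BorelSpace X]
    (μ : Measure X) [IsProbabilityMeasure μ]
    (T : X ≃ᵐ X) (hT : MeasurePreserving T μ μ)
    (n : ℕ → ℕ)
    (hrig : ∀ f : Lp ℝ 2 μ,
      Tendsto (fun i =>
          ‖Lp.compMeasurePreserving ((⇑T)^[n i]) (hT.iterate (n i)) f - f‖)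
        atTop (nhds 0)) :
    Tendsto (fun i =>
        ⨆ ξ : {ξ : Measure (X × X) // IsProbabilityMeasure ξ ∧
            ξ.map Prod.fst = μ ∧ ξ.map Prod.snd = μ},
          levyProkhorovDist
            ((fun ρ : Measure (X × X) => ρ.map (Prod.map ⇑T ⇑T))^[n i] ξ.1) ξ.1)
      atTop (nhds 0) := by
  have hdist (c : X) : TendstoInMeasure μ (fun i => (dist · c) ∘ (⇑T)^[n i]) atTop (dist · c) :=
    tendstoInMeasure_comp_of_tendsto_compMeasurePreserving (fun i => hT.iterate (n i)) hrig
      (ContinuousMap.memLp μ ℝ ⟨(dist · c), by fun_prop⟩)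
  have hrigid : TendstoInMeasure μ (fun i => (⇑T)^[n i]) atTop id :=
    tendstoInMeasure_of_forall_tendstoInMeasure_dist isCompact_univ.totallyBounded hdist
  refine Metric.tendsto_nhds.2 fun ε hε => ?_
  have hsmall : Tendsto (fun i => 2 * μ {x | ε / 2 ≤ dist ((⇑T)^[n i] x) x}) atTop (𝓝 0) := by
    simpa using ENNReal.Tendsto.const_mul (a := 2)
      (tendstoInMeasure_iff_dist.1 hrigid (ε / 2) (by positivity)) (Or.inr ENNReal.ofNat_ne_top)
  filter_upwards [hsmall.eventually_lt_const (ENNReal.ofReal_pos.2 (half_pos hε))] with i hi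
  have hbound : ∀ ξ : {ξ : Measure (X × X) // IsProbabilityMeasure ξ ∧
      ξ.map Prod.fst = μ ∧ ξ.map Prod.snd = μ},
      levyProkhorovDist
        ((fun ρ : Measure (X × X) => ρ.map (Prod.map ⇑T ⇑T))^[n i] ξ.1) ξ.1 ≤ ε / 2 := by
    rintro ⟨ξ, hprob, hfst, hsnd⟩
    rw [Measure.iterate_map (T.measurable.prodMap T.measurable), Prod.map_iterate]
    exact levyProkhorovDist_map_prodMap_le μ ξ hfst hsnd (T.measurable.iterate _)
      (by positivity) hi.le
  rw [Real.dist_0_eq_abs, abs_lt]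
  constructor
  · exact (neg_neg_of_pos hε).trans_le (Real.iSup_nonneg fun _ => ENNReal.toReal_nonneg)
  · exact (Real.iSup_le hbound (by positivity)).trans_lt (half_lt_self hε)

/-- Let `T` be a measure-preserving automorphism of `(X, B, μ)` which
is rigid along an increasing sequence `(n i)`: the Koopman operators `U_T^{n i}` tend to
the identity strongly on `L²(μ)`.  Then the lens `T̃(ξ) = (T × T)_* ξ` is uniformly
rigid along `(n i)`: the supremum over all couplings `ξ ∈ C₂(μ)` of the
(Lévy–Prokhorov) distance from `T̃^{n i} ξ` to `ξ` tends to `0`. -/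
theorem lens_stmt10 {X : Type*} [MetricSpace X] [CompactSpace X]
    [MeasurableSpace X] [BorelSpace X]
    (μ : Measure X) [IsProbabilityMeasure μ]
    (T : X ≃ᵐ X) (hT : MeasurePreserving T μ μ)
    (n : ℕ → ℕ) (hmono : StrictMono n)
    (hrig : ∀ f : Lp ℝ 2 μ,
      Tendsto (fun i =>
          ‖Lp.compMeasurePreserving ((⇑T)^[n i]) (hT.iterate (n i)) f - f‖)
        atTop (nhds 0)) :
    Tendsto (fun i =>
        ⨆ ξ : {ξ : Measure (X × X) // IsProbabilityMeasure ξ ∧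
            ξ.map Prod.fst = μ ∧ ξ.map Prod.snd = μ},
          levyProkhorovDist
            ((fun ρ : Measure (X × X) => ρ.map (Prod.map ⇑T ⇑T))^[n i] ξ.1) ξ.1)
      atTop (nhds 0) :=
  lens_stmt10_general μ T hT n hrig
end

section
/- Let T be an ergodic automorphism of a standard probability space. If the lens T̃ on C₂(μ) is topologically transitive, then T is weakly mixing. -/
open MeasureTheory Filter

/-- The topological lens of an automorphism `T`, acting on probability measures on
`X × X` by pushforward under `T × T`. -/
noncomputable def lensP {X : Type*} [MeasurableSpace X] (T : X ≃ᵐ X)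
    (ξ : ProbabilityMeasure (X × X)) : ProbabilityMeasure (X × X) :=
  ξ.map (f := ⇑(T.prodCongr T)) (T.prodCongr T).measurable.aemeasurable

/-- The set `C₂(μ)` of couplings of `μ` inside the space of probability measures on
`X × X` (with the weak* topology). -/
def couplingSet {X : Type*} [MeasurableSpace X] (μ : Measure X) :
    Set (ProbabilityMeasure (X × X)) :=
  {ξ | (ξ : Measure (X × X)).map Prod.fst = μ ∧ (ξ : Measure (X × X)).map Prod.snd = μ}


open Set

/-!
If `s ⊆ X × X` is `T × T`-invariant, put `k = 1_s` and `G(x, y) = ∫ k(u, x) k(u, y) dμ(u)`.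
The functional `Ψ ξ = ∫ G dξ` is invariant under the lens, and it is continuous on `C₂(μ)`:
replacing `k` by a continuous kernel `c` changes `Ψ` by at most `2 ‖k - c‖_{L¹(μ ⊗ μ)}`
uniformly on couplings, since their marginals are `μ`. A continuous invariant function of a
topologically transitive system is constant, so `Ψ` takes the same value on the diagonal
coupling, where it is `(μ ⊗ μ)(s)`, and on the product coupling, where it is `(μ ⊗ μ)(s)²`
because the sections `u ↦ μ(s_u)` are `T`-invariant, hence constant by ergodicity of `T`.
So `(μ ⊗ μ)(s)` is `0` or `1`.
-/

def IsTopTransitiveOn {P : Type*} [TopologicalSpace P] (L : P → P) (C : Set P) : Prop :=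
  ∀ U V : Set P, IsOpen U → IsOpen V → (U ∩ C).Nonempty → (V ∩ C).Nonempty →
    ∃ n : ℕ, (L^[n] ⁻¹' U ∩ V ∩ C).Nonempty

theorem IsTopTransitiveOn.eq_of_continuousOn {P Y : Type*} [TopologicalSpace P]
    [TopologicalSpace Y] [T2Space Y] {L : P → P} {C : Set P} {f : P → Y}
    (htrans : IsTopTransitiveOn L C) (hL : MapsTo L C C) (hf : ContinuousOn f C)
    (hfL : ∀ x ∈ C, f (L x) = f x) {x y : P} (hx : x ∈ C) (hy : y ∈ C) : f x = f y := by
  have hf_iterate : ∀ n, ∀ z ∈ C, f (L^[n] z) = f z := by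
    intro n
    induction n with
    | zero => simp
    | succ n ih =>
      intro z hz
      rw [Function.iterate_succ_apply', hfL _ (hL.iterate n hz), ih z hz]
  by_contra hne
  obtain ⟨A, B, hA, hB, hxA, hyB, hAB⟩ := t2_separation hne
  obtain ⟨U, hU, hUA⟩ := continuousOn_iff'.1 hf A hA
  obtain ⟨V, hV, hVB⟩ := continuousOn_iff'.1 hf B hB
  have hxU : x ∈ U ∩ C := hUA ▸ ⟨hxA, hx⟩
  have hyV : y ∈ V ∩ C := hVB ▸ ⟨hyB, hy⟩
  obtain ⟨n, z, ⟨hzU, hzV⟩, hzC⟩ := htrans U V hU hV ⟨x, hxU⟩ ⟨y, hyV⟩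
  have hLz : f (L^[n] z) ∈ A := (hUA.symm ▸ ⟨hzU, hL.iterate n hzC⟩ : L^[n] z ∈ f ⁻¹' A ∩ C).1
  have hz : f z ∈ B := (hVB.symm ▸ ⟨hzV, hzC⟩ : z ∈ f ⁻¹' B ∩ C).1
  exact hAB.ne_of_mem hLz hz (hf_iterate n z hzC)

section Couplings

variable {X : Type*} [MeasurableSpace X] {μ : Measure X}

lemma coe_lensP (T : X ≃ᵐ X) (ξ : ProbabilityMeasure (X × X)) :
    (lensP T ξ : Measure (X × X)) = (ξ : Measure (X × X)).map (T.prodCongr T) := by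
  simp [lensP]

lemma mapsTo_lensP_couplingSet {T : X ≃ᵐ X} (hT : MeasurePreserving T μ μ) :
    MapsTo (lensP T) (couplingSet μ) (couplingSet μ) := by
  rintro ξ ⟨hξ₁, hξ₂⟩
  constructor
  · rw [coe_lensP, Measure.map_map measurable_fst (T.prodCongr T).measurable,
      show Prod.fst ∘ T.prodCongr T = T ∘ Prod.fst from rfl,
      ← Measure.map_map T.measurable measurable_fst, hξ₁, hT.map_eq]
  · rw [coe_lensP, Measure.map_map measurable_snd (T.prodCongr T).measurable,
      show Prod.snd ∘ T.prodCongr T = T ∘ Prod.snd from rfl,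
      ← Measure.map_map T.measurable measurable_snd, hξ₂, hT.map_eq]

lemma integral_comp_fst_of_mem_couplingSet {ξ : ProbabilityMeasure (X × X)}
    (hξ : ξ ∈ couplingSet μ) {f : X → ℝ} (hf : AEStronglyMeasurable f μ) :
    ∫ q, f q.1 ∂(ξ : Measure (X × X)) = ∫ x, f x ∂μ := by
  rw [← hξ.1] at hf ⊢
  rw [integral_map measurable_fst.aemeasurable hf]

lemma integral_comp_snd_of_mem_couplingSet {ξ : ProbabilityMeasure (X × X)}
    (hξ : ξ ∈ couplingSet μ) {f : X → ℝ} (hf : AEStronglyMeasurable f μ) :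
    ∫ q, f q.2 ∂(ξ : Measure (X × X)) = ∫ x, f x ∂μ := by
  rw [← hξ.2] at hf ⊢
  rw [integral_map measurable_snd.aemeasurable hf]

variable (μ) [IsProbabilityMeasure μ]

noncomputable def diagCoupling : ProbabilityMeasure (X × X) :=
  ⟨μ.map fun x => (x, x), Measure.isProbabilityMeasure_map (by fun_prop)⟩

noncomputable def prodCoupling : ProbabilityMeasure (X × X) := ⟨μ.prod μ, inferInstance⟩

lemma diagCoupling_mem_couplingSet : diagCoupling μ ∈ couplingSet μ := by
  constructor <;>
  · rw [diagCoupling, ProbabilityMeasure.coe_mk, Measure.map_map (by fun_prop) (by fun_prop)]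
    exact Measure.map_id

lemma prodCoupling_mem_couplingSet : prodCoupling μ ∈ couplingSet μ := by
  constructor <;> simp [prodCoupling]

end Couplings

lemma integrable_of_abs_le {α : Type*} [MeasurableSpace α] {ν : Measure α} [IsFiniteMeasure ν]
    {f : α → ℝ} (hf : Measurable f) {C : ℝ} (h : ∀ a, |f a| ≤ C) : Integrable f ν :=
  .of_bound hf.aestronglyMeasurable C (ae_of_all _ h)

lemma abs_indicator_one_le {α : Type*} (s : Set α) (a : α) : |s.indicator (1 : α → ℝ) a| ≤ 1 := by
  simpa using norm_indicator_le_norm_self (s := s) (1 : α → ℝ) a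

lemma abs_mul_sub_mul_le {a b a' b' : ℝ} (hb : |b| ≤ 1) (ha' : |a'| ≤ 1) :
    |a * b - a' * b'| ≤ |a - a'| + |b - b'| :=
  calc |a * b - a' * b'| = |(a - a') * b + a' * (b - b')| := by ring_nf
    _ ≤ |a - a'| * |b| + |a'| * |b - b'| := by
      rw [← abs_mul, ← abs_mul]; exact abs_add_le _ _
    _ ≤ |a - a'| * 1 + 1 * |b - b'| := by gcongr
    _ = |a - a'| + |b - b'| := by ring

lemma abs_sub_clamp_le {a b : ℝ} (ha : |a| ≤ 1) : |a - max (-1) (min 1 b)| ≤ |a - b| := by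
  have ha' : max (-1) (min 1 a) = a := by
    rw [abs_le] at ha; rw [min_eq_right ha.2, max_eq_right ha.1]
  calc |a - max (-1) (min 1 b)| = |max (min 1 a) (-1) - max (min 1 b) (-1)| := by
        rw [max_comm (min 1 a), ha', max_comm (min 1 b)]
    _ ≤ |min 1 a - min 1 b| := abs_max_sub_max_le_abs _ _ _
    _ ≤ |a - b| := by simpa using abs_min_sub_min_le_max 1 a 1 b

lemma exists_continuous_abs_le_one_integral_abs_sub_le {α : Type*} [TopologicalSpace α]
    [NormalSpace α] [MeasurableSpace α] [BorelSpace α] {ν : Measure α} [ν.WeaklyRegular]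
    {k : α → ℝ} (hk : Integrable k ν) (hk1 : ∀ p, |k p| ≤ 1) {ε : ℝ} (hε : 0 < ε) :
    ∃ c : α → ℝ, Continuous c ∧ (∀ p, |c p| ≤ 1) ∧ ∫ p, |k p - c p| ∂ν ≤ ε := by
  obtain ⟨g, hgk, hg⟩ := hk.exists_boundedContinuous_integral_sub_le hε
  refine ⟨fun p => max (-1) (min 1 (g p)), by fun_prop, fun p => ?_, ?_⟩
  · exact abs_le.2 ⟨le_max_left _ _, max_le (by norm_num) (min_le_left _ _)⟩
  · refine le_trans (integral_mono_of_nonneg (ae_of_all _ fun p => abs_nonneg _)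
      (hk.sub hg).norm (ae_of_all _ fun p => ?_)) hgk
    exact abs_sub_clamp_le (hk1 p)

lemma Ergodic.integral_section_ae_eq {X : Type*} [MeasurableSpace X] {μ : Measure X}
    [IsProbabilityMeasure μ] {T : X ≃ᵐ X} (herg : Ergodic T μ)
    {k : X × X → ℝ} (hk : Integrable k (μ.prod μ)) (hinv : ∀ u x, k (T u, T x) = k (u, x)) :
    (fun u => ∫ x, k (u, x) ∂μ) =ᵐ[μ] fun _ => ∫ p, k p ∂μ.prod μ := by
  have hsection_inv : (fun u => ∫ x, k (u, x) ∂μ) ∘ T = fun u => ∫ x, k (u, x) ∂μ := by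
    funext u
    rw [Function.comp_apply, ← herg.toMeasurePreserving.integral_comp']
    simp only [hinv]
  obtain ⟨c, hc⟩ := herg.ae_eq_const_of_ae_eq_comp_ae
    hk.integral_prod_left.aestronglyMeasurable hsection_inv.eventuallyEq
  have hc_eq : c = ∫ p, k p ∂μ.prod μ := by
    rw [integral_prod _ hk, integral_congr_ae hc]
    simp
  rwa [hc_eq] at hc

section GramKernel

variable {X : Type*} [MeasurableSpace X] (μ : Measure X)

noncomputable def gramKernel (k : X × X → ℝ) (q : X × X) : ℝ :=
  ∫ u, k (u, q.1) * k (u, q.2) ∂μ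

noncomputable def gramFunctional (k : X × X → ℝ) (ξ : ProbabilityMeasure (X × X)) : ℝ :=
  ∫ q, gramKernel μ k q ∂(ξ : Measure (X × X))

variable {μ} {k c : X × X → ℝ}

lemma measurable_gramKernel [SFinite μ] (hk : Measurable k) : Measurable (gramKernel μ k) :=
  StronglyMeasurable.measurable <| StronglyMeasurable.integral_prod_left'
    (f := fun z : X × (X × X) => k (z.1, z.2.1) * k (z.1, z.2.2))
    (by fun_prop : Measurable _).stronglyMeasurable

lemma gramKernel_prodMap {T : X ≃ᵐ X} (hT : MeasurePreserving T μ μ)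
    (hk : ∀ u x, k (T u, T x) = k (u, x)) (q : X × X) :
    gramKernel μ k (T q.1, T q.2) = gramKernel μ k q := by
  simp only [gramKernel]
  rw [← hT.integral_comp']
  simp only [hk]

lemma gramFunctional_lensP {T : X ≃ᵐ X} (hT : MeasurePreserving T μ μ)
    (hk : ∀ u x, k (T u, T x) = k (u, x)) (ξ : ProbabilityMeasure (X × X)) :
    gramFunctional μ k (lensP T ξ) = gramFunctional μ k ξ := by
  rw [gramFunctional, coe_lensP, integral_map_equiv]
  exact integral_congr_ae (ae_of_all _ (gramKernel_prodMap hT hk))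

variable [IsProbabilityMeasure μ]

lemma abs_gramKernel_le (hk1 : ∀ p, |k p| ≤ 1) (q : X × X) : |gramKernel μ k q| ≤ 1 := by
  simpa [gramKernel] using norm_integral_le_of_norm_le_const (μ := μ) (C := 1)
    (f := fun u => k (u, q.1) * k (u, q.2)) <| ae_of_all _ fun u => by
      rw [Real.norm_eq_abs, abs_mul]; exact mul_le_one₀ (hk1 _) (abs_nonneg _) (hk1 _)

lemma gramFunctional_diagCoupling (hk : Measurable k) (hk1 : ∀ p, |k p| ≤ 1) :
    gramFunctional μ k (diagCoupling μ) = ∫ p, k p ^ 2 ∂μ.prod μ := by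
  have hk2 : Integrable (fun p => k p ^ 2) (μ.prod μ) :=
    integrable_of_abs_le (by fun_prop) fun p => by
      rw [abs_pow]; exact pow_le_one₀ (abs_nonneg _) (hk1 p)
  rw [gramFunctional, diagCoupling, ProbabilityMeasure.coe_mk,
    integral_map (by fun_prop) (measurable_gramKernel hk).aestronglyMeasurable,
    integral_prod_symm _ hk2]
  simp [gramKernel, sq]

lemma gramFunctional_prodCoupling (hk : Measurable k) (hk1 : ∀ p, |k p| ≤ 1) :
    gramFunctional μ k (prodCoupling μ) = ∫ u, (∫ x, k (u, x) ∂μ) ^ 2 ∂μ := by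
  have hsection : Measurable fun u => ∫ x, k (u, x) ∂μ :=
    hk.stronglyMeasurable.integral_prod_right'.measurable
  have hsection1 : ∀ u, |∫ x, k (u, x) ∂μ| ≤ 1 := fun u => by
    simpa using norm_integral_le_of_norm_le_const (μ := μ) (C := 1)
      (f := fun x => k (u, x)) (ae_of_all _ fun x => hk1 _)
  calc gramFunctional μ k (prodCoupling μ)
      = ∫ x, ∫ y, ∫ u, k (u, x) * k (u, y) ∂μ ∂μ ∂μ :=
        integral_prod _ (integrable_of_abs_le (measurable_gramKernel hk) (abs_gramKernel_le hk1))
    _ = ∫ x, ∫ u, k (u, x) * ∫ y, k (u, y) ∂μ ∂μ ∂μ := by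
        refine integral_congr_ae (ae_of_all _ fun x => ?_)
        dsimp only
        rw [integral_integral_swap (integrable_of_abs_le (C := 1) (by fun_prop) fun p => ?_)]
        · simp_rw [integral_const_mul]
        · rw [Function.uncurry_apply_pair, abs_mul]
          exact mul_le_one₀ (hk1 _) (abs_nonneg _) (hk1 _)
    _ = ∫ u, (∫ x, k (u, x) ∂μ) ^ 2 ∂μ := by
        rw [integral_integral_swap (f := fun x u => k (u, x) * ∫ y, k (u, y) ∂μ)
          (integrable_of_abs_le (C := 1)
            ((hk.comp measurable_swap).mul (hsection.comp measurable_snd)) fun p => ?_)]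
        · simp_rw [integral_mul_const, sq]
        · rw [Function.uncurry_apply_pair, abs_mul]
          exact mul_le_one₀ (hk1 _) (abs_nonneg _) (hsection1 _)

lemma abs_gramKernel_sub_le (hk : Measurable k) (hc : Measurable c) (hk1 : ∀ p, |k p| ≤ 1)
    (hc1 : ∀ p, |c p| ≤ 1) (q : X × X) :
    |gramKernel μ k q - gramKernel μ c q|
      ≤ ∫ u, |k (u, q.1) - c (u, q.1)| ∂μ + ∫ u, |k (u, q.2) - c (u, q.2)| ∂μ := by
  have hprod : ∀ {f : X × X → ℝ}, Measurable f → (∀ p, |f p| ≤ 1) →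
      Integrable (fun u => f (u, q.1) * f (u, q.2)) μ := fun hf hf1 =>
    integrable_of_abs_le (C := 1) (by fun_prop) fun u => by
      rw [abs_mul]; exact mul_le_one₀ (hf1 _) (abs_nonneg _) (hf1 _)
  have hdiff : ∀ x, Integrable (fun u => |k (u, x) - c (u, x)|) μ := fun x =>
    integrable_of_abs_le (C := 2) (by fun_prop) fun u => by
      rw [abs_abs]; linarith [abs_sub (k (u, x)) (c (u, x)), hk1 (u, x), hc1 (u, x)]
  rw [gramKernel, gramKernel, ← integral_sub (hprod hk hk1) (hprod hc hc1),
    ← integral_add (hdiff _) (hdiff _)]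
  refine abs_integral_le_integral_abs.trans <|
    integral_mono ((hprod hk hk1).sub (hprod hc hc1)).abs ((hdiff _).add (hdiff _)) fun u => ?_
  exact abs_mul_sub_mul_le (hk1 _) (hc1 _)

lemma abs_gramFunctional_sub_le (hk : Measurable k) (hc : Measurable c) (hk1 : ∀ p, |k p| ≤ 1)
    (hc1 : ∀ p, |c p| ≤ 1) {ξ : ProbabilityMeasure (X × X)} (hξ : ξ ∈ couplingSet μ) :
    |gramFunctional μ k ξ - gramFunctional μ c ξ| ≤ 2 * ∫ p, |k p - c p| ∂μ.prod μ := by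
  set d : X → ℝ := fun x => ∫ u, |k (u, x) - c (u, x)| ∂μ
  have hkc1 : ∀ p, |(|k p - c p|)| ≤ 2 := fun p => by
    rw [abs_abs]; linarith [abs_sub (k p) (c p), hk1 p, hc1 p]
  have hd : Measurable d :=
    StronglyMeasurable.measurable <| StronglyMeasurable.integral_prod_left'
      (f := fun p => |k p - c p|) (by fun_prop : Measurable _).stronglyMeasurable
  have hd1 : ∀ x, |d x| ≤ 2 := fun x => by
    simpa [d] using norm_integral_le_of_norm_le_const (μ := μ) (C := 2)
      (f := fun u => |k (u, x) - c (u, x)|) (ae_of_all _ fun u => hkc1 _)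
  have hdμ : ∫ x, d x ∂μ = ∫ p, |k p - c p| ∂μ.prod μ :=
    (integral_prod_symm _ (integrable_of_abs_le (by fun_prop) hkc1)).symm
  have hgram : ∀ {f : X × X → ℝ}, Measurable f → (∀ p, |f p| ≤ 1) →
      Integrable (gramKernel μ f) (ξ : Measure (X × X)) := fun hf hf1 =>
    integrable_of_abs_le (measurable_gramKernel hf) (abs_gramKernel_le hf1)
  have hd_fst : Integrable (fun q : X × X => d q.1) (ξ : Measure (X × X)) :=
    integrable_of_abs_le (by fun_prop) fun q => hd1 q.1
  have hd_snd : Integrable (fun q : X × X => d q.2) (ξ : Measure (X × X)) :=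
    integrable_of_abs_le (by fun_prop) fun q => hd1 q.2
  calc |gramFunctional μ k ξ - gramFunctional μ c ξ|
      = |∫ q, (gramKernel μ k q - gramKernel μ c q) ∂(ξ : Measure (X × X))| := by
        rw [gramFunctional, gramFunctional, integral_sub (hgram hk hk1) (hgram hc hc1)]
    _ ≤ ∫ q, |gramKernel μ k q - gramKernel μ c q| ∂(ξ : Measure (X × X)) :=
        abs_integral_le_integral_abs
    _ ≤ ∫ q, (d q.1 + d q.2) ∂(ξ : Measure (X × X)) :=
        integral_mono ((hgram hk hk1).sub (hgram hc hc1)).abs (hd_fst.add hd_snd)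
          (abs_gramKernel_sub_le hk hc hk1 hc1)
    _ = 2 * ∫ p, |k p - c p| ∂μ.prod μ := by
        rw [integral_add hd_fst hd_snd, integral_comp_fst_of_mem_couplingSet hξ
          hd.aestronglyMeasurable, integral_comp_snd_of_mem_couplingSet hξ
          hd.aestronglyMeasurable, hdμ, two_mul]

lemma continuous_gramFunctional [TopologicalSpace X] [SecondCountableTopology X]
    [OpensMeasurableSpace X] (hc : Continuous c) (hc1 : ∀ p, |c p| ≤ 1) :
    Continuous (gramFunctional μ c) := by
  have hgram : Continuous (gramKernel μ c) :=
    continuous_of_dominated (bound := fun _ => 1)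
      (fun q => (by fun_prop : Continuous fun u => c (u, q.1) * c (u, q.2)).aestronglyMeasurable)
      (fun q => ae_of_all _ fun u => by
        rw [Real.norm_eq_abs, abs_mul]; exact mul_le_one₀ (hc1 _) (abs_nonneg _) (hc1 _))
      (integrable_const 1) (ae_of_all _ fun u => by fun_prop)
  exact ProbabilityMeasure.continuous_integral_boundedContinuousFunction
    (BoundedContinuousFunction.mkOfBound ⟨_, hgram⟩ 2 fun q q' => by
      change |gramKernel μ c q - gramKernel μ c q'| ≤ 2
      linarith [abs_sub (gramKernel μ c q) (gramKernel μ c q'), abs_gramKernel_le (μ := μ) hc1 q,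
        abs_gramKernel_le (μ := μ) hc1 q'])

lemma continuousOn_gramFunctional [MetricSpace X] [SecondCountableTopology X] [BorelSpace X]
    (hk : Measurable k) (hk1 : ∀ p, |k p| ≤ 1) :
    ContinuousOn (gramFunctional μ k) (couplingSet μ) := by
  refine continuousOn_of_uniform_approx_of_continuousOn fun U hU => ?_
  obtain ⟨ε, hε, hεU⟩ := Metric.mem_uniformity_dist.1 hU
  obtain ⟨c, hc, hc1, hkc⟩ := exists_continuous_abs_le_one_integral_abs_sub_le
    (integrable_of_abs_le (ν := μ.prod μ) hk hk1) hk1 (by positivity : 0 < ε / 3)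
  refine ⟨gramFunctional μ c, (continuous_gramFunctional hc hc1).continuousOn,
    fun ξ hξ => hεU ?_⟩
  rw [Real.dist_eq]
  linarith [abs_gramFunctional_sub_le hk hc.measurable hk1 hc1 hξ]

lemma gramFunctional_indicator_diagCoupling {s : Set (X × X)} (hs : MeasurableSet s) :
    gramFunctional μ (s.indicator 1) (diagCoupling μ) = (μ.prod μ).real s := by
  have hk_sq : (fun p => s.indicator (1 : X × X → ℝ) p ^ 2) = s.indicator 1 := funext fun p => by
    by_cases hp : p ∈ s <;> simp [hp]
  rw [gramFunctional_diagCoupling (measurable_one.indicator hs) (abs_indicator_one_le s), hk_sq,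
    integral_indicator_one hs]

lemma Ergodic.gramFunctional_prodCoupling {T : X ≃ᵐ X} (herg : Ergodic T μ) (hk : Measurable k)
    (hk1 : ∀ p, |k p| ≤ 1) (hinv : ∀ u x, k (T u, T x) = k (u, x)) :
    gramFunctional μ k (prodCoupling μ) = (∫ p, k p ∂μ.prod μ) ^ 2 := by
  rw [_root_.gramFunctional_prodCoupling hk hk1,
    integral_congr_ae (g := fun _ => (∫ p, k p ∂μ.prod μ) ^ 2)]
  · simp
  · filter_upwards [herg.integral_section_ae_eq (integrable_of_abs_le hk hk1) hinv] with u hu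
    rw [hu]

end GramKernel

lemma eventuallyConst_ae_of_measureReal_eq_sq {α : Type*} [MeasurableSpace α] {ν : Measure α}
    [IsProbabilityMeasure ν] {s : Set α} (hs : MeasurableSet s) (h : ν.real s = ν.real s ^ 2) :
    EventuallyConst s (ae ν) := by
  rw [eventuallyConst_set', ae_eq_empty, ae_eq_univ, prob_compl_eq_zero_iff hs]
  have hs01 : ν.real s * (ν.real s - 1) = 0 := by linear_combination -h
  rcases mul_eq_zero.1 hs01 with h0 | h1
  · exact .inl ((measureReal_eq_zero_iff (measure_ne_top _ _)).1 h0)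
  · exact .inr ((ENNReal.toReal_eq_one_iff _).1 (by rw [← measureReal_def]; linarith))

theorem lens_stmt14_general {X : Type*} [MetricSpace X]
    [SecondCountableTopology X] [MeasurableSpace X] [BorelSpace X]
    (μ : Measure X) [IsProbabilityMeasure μ]
    (T : X ≃ᵐ X) (herg : Ergodic T μ)
    (htrans : ∀ U V : Set (ProbabilityMeasure (X × X)), IsOpen U → IsOpen V →
      (U ∩ couplingSet μ).Nonempty → (V ∩ couplingSet μ).Nonempty →
      ∃ n : ℕ, ((lensP T)^[n] ⁻¹' U ∩ V ∩ couplingSet μ).Nonempty) :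
    Ergodic (Prod.map ⇑T ⇑T) (μ.prod μ) := by
  have hT := herg.toMeasurePreserving
  refine ⟨hT.prod hT, ⟨fun s hs hsi => ?_⟩⟩
  set k : X × X → ℝ := s.indicator 1
  have hk : Measurable k := measurable_one.indicator hs
  have hk1 : ∀ p, |k p| ≤ 1 := abs_indicator_one_le s
  have hk_inv : ∀ u x, k (T u, T x) = k (u, x) := fun u x => by
    simp only [k]
    conv_rhs => rw [← hsi]
    rfl
  have hgram := IsTopTransitiveOn.eq_of_continuousOn htrans (mapsTo_lensP_couplingSet hT)
    (continuousOn_gramFunctional hk hk1) (fun ξ _ => gramFunctional_lensP hT hk_inv ξ)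
    (diagCoupling_mem_couplingSet μ) (prodCoupling_mem_couplingSet μ)
  rw [gramFunctional_indicator_diagCoupling hs, herg.gramFunctional_prodCoupling hk hk1 hk_inv,
    integral_indicator_one hs] at hgram
  exact eventuallyConst_ae_of_measureReal_eq_sq hs hgram

/-- Let `T` be an ergodic automorphism of a standard probability
space.  If the lens `T̃` is topologically transitive on `C₂(μ)` (with the weak*
topology), then `T` is weakly mixing, i.e. `T × T` is ergodic for `μ ⊗ μ`. -/
theorem lens_stmt14 {X : Type*} [MetricSpace X] [CompactSpace X]
    [SecondCountableTopology X] [MeasurableSpace X] [BorelSpace X]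
    (μ : Measure X) [IsProbabilityMeasure μ]
    (T : X ≃ᵐ X) (hT : MeasurePreserving T μ μ) (herg : Ergodic T μ)
    (htrans : ∀ U V : Set (ProbabilityMeasure (X × X)), IsOpen U → IsOpen V →
      (U ∩ couplingSet μ).Nonempty → (V ∩ couplingSet μ).Nonempty →
      ∃ n : ℕ, ((lensP T)^[n] ⁻¹' U ∩ V ∩ couplingSet μ).Nonempty) :
    Ergodic (Prod.map ⇑T ⇑T) (μ.prod μ) :=
  lens_stmt14_general μ T herg htrans
end
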